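/- arXiv:math/0605670 — 4 statements merged into one kernel-verified Lean document; each statement's English description precedes it below -/
import Mathlib

section
/- For all integers n and k with 0 ≤ k ≤ n, Σ_{π ∈ OP(n,k)} q^{ROS(π)} = [k]!·S_q[n,k]. -/
/-- The indeterminate `q`, as an element of the field of rational functions over `ℚ`. -/
noncomputable def qq : RatFunc ℚ := RatFunc.X

/-- The q-integer `[m] = 1 + q + ⋯ + q^(m-1)`. -/
noncomputable def qint (m : ℕ) : RatFunc ℚ := ∑ j ∈ Finset.range m, qq ^ j

/-- The q-factorial `[m]! = [m][m-1]⋯[1]`, with `[0]! = 1`. -/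
noncomputable def qfac : ℕ → RatFunc ℚ
  | 0 => 1
  | m + 1 => qint (m + 1) * qfac m

/-- The Gaussian binomial coefficient `[a]!/([b]!·[a-b]!)` (zero if `b > a`). -/
noncomputable def qbinom (a b : ℕ) : RatFunc ℚ :=
  if b ≤ a then qfac a / (qfac b * qfac (a - b)) else 0

/-- The q-Stirling number of the second kind. -/
noncomputable def qStirling (n k : ℕ) : RatFunc ℚ :=
  if k ≤ n then
    (∑ i ∈ Finset.range (k + 1),
      (-1 : RatFunc ℚ) ^ i * qbinom k i * qq ^ Nat.choose i 2 * qint (k - i) ^ n) / qfac k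
  else 0

/-- Ordered partitions of `{1,…,n}` (encoded as `Fin n`) into `k` blocks: sequences
`(B_1,…,B_k)` of pairwise disjoint nonempty subsets whose union is everything, i.e.
every letter lies in exactly one block. -/
def OP (n k : ℕ) : Finset (Fin k → Finset (Fin n)) :=
  Finset.univ.filter fun B =>
    (∀ j, (B j).Nonempty) ∧ ∀ x : Fin n, ∃ j, x ∈ B j ∧ ∀ j', x ∈ B j' → j' = j

/-- `ros(π)`: the number of pairs `(i,j)` of letters with `j < i`, `j` the opener
(least element) of its block, and the block of `j` strictly to the right of the
block of `i`. -/
def ros {n k : ℕ} (B : Fin k → Finset (Fin n)) : ℕ :=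
  ((Finset.univ : Finset (Fin n × Fin n)).filter fun ij =>
    ij.2 < ij.1 ∧ ∃ a b : Fin k, ij.1 ∈ B a ∧ ij.2 ∈ B b ∧ (B b).min = ↑ij.2 ∧ a < b).card

/-- `rcb(π)`: pairs `(i,j)` with `j > i`, `j` the closer (greatest element) of its block,
and the block of `j` strictly to the right of the block of `i`. -/
def rcb {n k : ℕ} (B : Fin k → Finset (Fin n)) : ℕ :=
  ((Finset.univ : Finset (Fin n × Fin n)).filter fun ij =>
    ij.1 < ij.2 ∧ ∃ a b : Fin k, ij.1 ∈ B a ∧ ij.2 ∈ B b ∧ (B b).max = ↑ij.2 ∧ a < b).card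

/-- `los(π)`: pairs `(i,j)` with `j < i`, `j` the opener of its block, and the block of
`j` strictly to the left of the block of `i`. -/
def los {n k : ℕ} (B : Fin k → Finset (Fin n)) : ℕ :=
  ((Finset.univ : Finset (Fin n × Fin n)).filter fun ij =>
    ij.2 < ij.1 ∧ ∃ a b : Fin k, ij.1 ∈ B a ∧ ij.2 ∈ B b ∧ (B b).min = ↑ij.2 ∧ b < a).card

/-- `lcb(π)`: pairs `(i,j)` with `j > i`, `j` the closer of its block, and the block of
`j` strictly to the left of the block of `i`. -/
def lcb {n k : ℕ} (B : Fin k → Finset (Fin n)) : ℕ :=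
  ((Finset.univ : Finset (Fin n × Fin n)).filter fun ij =>
    ij.1 < ij.2 ∧ ∃ a b : Fin k, ij.1 ∈ B a ∧ ij.2 ∈ B b ∧ (B b).max = ↑ij.2 ∧ b < a).card

/-!
Ordered partitions into `k` blocks are the fibre families of surjections `Fin n → Fin k`, and
`ros` becomes a statistic of the surjection. Removing the largest letter, lying in block `a`,
lowers `ros` by `k - a` (for `k + 1` blocks) whether or not its block was a singleton: the openers
to its right are in bijection with the blocks to the right of `a`. Hence the generating function
`G(n, k)` of `ros` over surjections satisfies `G(n+1, k+1) = [k+1] (G(n, k+1) + G(n, k))`.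
The normalised `q^C(k,2) G(n, k)` then obeys the same recurrence and initial values as the
alternating sum defining `[k]! S_q[n, k]`, whose recurrence follows from
`[k+1] = [k+1-i] + q^(k+1-i) [i]` and the q-Pascal rule.
-/

open Finset Function

lemma qint_add (a b : ℕ) : qint (a + b) = qint a + qq ^ a * qint b := by
  simp only [qint, sum_range_add, pow_add, mul_sum]

open Polynomial in
lemma qint_ne_zero {m : ℕ} (hm : m ≠ 0) : qint m ≠ 0 := by
  have h : qint m = algebraMap ℚ[X] (RatFunc ℚ) (∑ j ∈ range m, X ^ j) := by
    simp [qint, qq, RatFunc.algebraMap_X]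
  rw [h, map_ne_zero_iff _ (RatFunc.algebraMap_injective ℚ)]
  intro h0
  simpa [hm] using congrArg (Polynomial.eval 1) h0

lemma qfac_succ (m : ℕ) : qfac (m + 1) = qint (m + 1) * qfac m := rfl

lemma qfac_ne_zero (m : ℕ) : qfac m ≠ 0 := by
  induction m with
  | zero => exact one_ne_zero
  | succ m ih => exact mul_ne_zero (qint_ne_zero m.succ_ne_zero) ih

lemma qbinom_of_le {a b : ℕ} (h : b ≤ a) : qbinom a b = qfac a / (qfac b * qfac (a - b)) :=
  if_pos h

lemma qbinom_of_lt {a b : ℕ} (h : a < b) : qbinom a b = 0 := if_neg h.not_ge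

lemma qbinom_zero_right (a : ℕ) : qbinom a 0 = 1 := by
  simp [qbinom_of_le, qfac, qfac_ne_zero]

lemma qbinom_self (a : ℕ) : qbinom a a = 1 := by
  simp [qbinom_of_le, qfac, qfac_ne_zero]

lemma qbinom_succ_succ {k i : ℕ} (h : i ≤ k) :
    qbinom (k + 1) (i + 1) = qq ^ (i + 1) * qbinom k (i + 1) + qbinom k i := by
  obtain ⟨d, rfl⟩ := Nat.exists_eq_add_of_le h
  rcases d with _ | d
  · simp [qbinom_self, qbinom_of_lt]
  have hsplit : qint (i + (d + 1) + 1) = qint (i + 1) + qq ^ (i + 1) * qint (d + 1) := by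
    rw [← qint_add]; ring_nf
  rw [qbinom_of_le (by omega), qbinom_of_le (by omega), qbinom_of_le (by omega),
    show i + (d + 1) + 1 - (i + 1) = d + 1 by omega, show i + (d + 1) - (i + 1) = d by omega,
    show i + (d + 1) - i = d + 1 by omega, qfac_succ (i + (d + 1)), hsplit, qfac_succ d, qfac_succ i]
  have := qfac_ne_zero i
  have := qfac_ne_zero d
  have := qint_ne_zero i.succ_ne_zero
  have := qint_ne_zero d.succ_ne_zero
  field_simp
  ring_nf

lemma qint_mul_qbinom_succ_succ {k j : ℕ} (h : j ≤ k) :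
    qint (j + 1) * qbinom (k + 1) (j + 1) = qint (k + 1) * qbinom k j := by
  rw [qbinom_of_le (by omega), qbinom_of_le h, Nat.add_sub_add_right, qfac_succ, qfac_succ]
  have := qfac_ne_zero j
  have := qfac_ne_zero (k - j)
  have := qint_ne_zero j.succ_ne_zero
  field_simp

noncomputable def qfacStirling (n k : ℕ) : RatFunc ℚ :=
  ∑ i ∈ range (k + 1), (-1) ^ i * qbinom k i * qq ^ i.choose 2 * qint (k - i) ^ n

lemma qfac_mul_qStirling {n k : ℕ} (h : k ≤ n) : qfac k * qStirling n k = qfacStirling n k := by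
  rw [qStirling, if_pos h, mul_div_cancel₀ _ (qfac_ne_zero k), qfacStirling]

lemma qfacStirling_zero_zero : qfacStirling 0 0 = 1 := by
  simp [qfacStirling, qbinom_zero_right]

lemma qfacStirling_succ_zero (n : ℕ) : qfacStirling (n + 1) 0 = 0 := by
  simp [qfacStirling, qint]

lemma choose_two_succ (j : ℕ) : (j + 1).choose 2 = j.choose 2 + j := by
  simp [Nat.choose_succ_succ, add_comm]

lemma sum_neg_one_pow_mul_qbinom (k : ℕ) :
    ∑ i ∈ range (k + 2), (-1) ^ i * qbinom (k + 1) i * qq ^ i.choose 2 = 0 := by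
  set t : ℕ → RatFunc ℚ := fun i => (-1) ^ i * qq ^ (i.choose 2 + i) * qbinom k i
  have htelescope : ∀ j ∈ range (k + 1),
      (-1) ^ (j + 1) * qbinom (k + 1) (j + 1) * qq ^ (j + 1).choose 2 = t (j + 1) - t j := by
    intro j hj
    rw [qbinom_succ_succ (Nat.lt_succ_iff.mp (mem_range.mp hj))]
    simp only [t, pow_add, pow_succ, choose_two_succ]
    ring
  rw [sum_range_succ', sum_congr rfl htelescope, sum_range_sub]
  simp [t, qbinom_of_lt, qbinom_zero_right]

lemma qfacStirling_zero_succ (k : ℕ) : qfacStirling 0 (k + 1) = 0 := by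
  simpa [qfacStirling] using sum_neg_one_pow_mul_qbinom k

lemma qfacStirling_succ_succ (n k : ℕ) :
    qfacStirling (n + 1) (k + 1) =
      qint (k + 1) * qfacStirling n (k + 1) + qq ^ k * qint (k + 1) * qfacStirling n k := by
  set c : ℕ → RatFunc ℚ := fun i => (-1) ^ i * qbinom (k + 1) i * qq ^ i.choose 2
  have hsplit : ∀ i ∈ range (k + 2), c i * qint (k + 1 - i) ^ (n + 1) =
      qint (k + 1) * (c i * qint (k + 1 - i) ^ n) -
        c i * (qq ^ (k + 1 - i) * qint i) * qint (k + 1 - i) ^ n := by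
    intro i hi
    have hi : i ≤ k + 1 := Nat.lt_succ_iff.mp (mem_range.mp hi)
    rw [show qint (k + 1) = qint (k + 1 - i) + qq ^ (k + 1 - i) * qint i by
      rw [← qint_add, Nat.sub_add_cancel hi]]
    ring
  have hshift : ∀ j ∈ range (k + 1),
      c (j + 1) * (qq ^ (k + 1 - (j + 1)) * qint (j + 1)) * qint (k + 1 - (j + 1)) ^ n =
        -(qq ^ k * qint (k + 1) * ((-1) ^ j * qbinom k j * qq ^ j.choose 2 * qint (k - j) ^ n)) := by
    intro j hj
    have hj : j ≤ k := Nat.lt_succ_iff.mp (mem_range.mp hj)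
    have hpow : qq ^ (j + 1).choose 2 * qq ^ (k - j) = qq ^ j.choose 2 * qq ^ k := by
      rw [← pow_add, ← pow_add, choose_two_succ, add_assoc, Nat.add_sub_cancel' hj]
    calc _ = -((-1) ^ j * (qint (j + 1) * qbinom (k + 1) (j + 1)) *
            (qq ^ (j + 1).choose 2 * qq ^ (k - j)) * qint (k - j) ^ n) := by
          simp only [c, Nat.add_sub_add_right]
          ring
      _ = _ := by
          rw [qint_mul_qbinom_succ_succ hj, hpow]
          ring
  simp only [qfacStirling]
  rw [sum_congr rfl hsplit, sum_sub_distrib, ← mul_sum,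
    sum_range_succ' (fun i => c i * (qq ^ (k + 1 - i) * qint i) * qint (k + 1 - i) ^ n),
    sum_congr rfl hshift]
  simp [c, qint, mul_sum]

section Openers

variable {n : ℕ} {α : Type*} [LinearOrder α]

def openers (f : Fin n → α) : Finset (Fin n) := {j | ∀ m, f m = f j → j ≤ m}

def rosFun (f : Fin n → α) : ℕ :=
  #{p : Fin n × Fin n | p.2 < p.1 ∧ p.2 ∈ openers f ∧ f p.1 < f p.2}

lemma injOn_openers (f : Fin n → α) : Set.InjOn f (openers f) := fun j hj j' hj' h =>
  le_antisymm ((mem_filter.mp hj).2 j' h.symm) ((mem_filter.mp hj').2 j h)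

lemma image_openers (f : Fin n → α) : (openers f).image f = univ.image f := by
  refine (image_subset_image (subset_univ _)).antisymm fun b hb => ?_
  have hne : ({m | f m = b} : Finset (Fin n)).Nonempty := by simpa [Finset.Nonempty] using hb
  have hmin := (mem_filter.mp (min'_mem _ hne)).2
  refine mem_image.mpr ⟨_, mem_filter.mpr ⟨mem_univ _, fun m hm => ?_⟩, hmin⟩
  exact min'_le _ m (mem_filter.mpr ⟨mem_univ m, hm.trans hmin⟩)

lemma card_filter_openers (f : Fin n → α) (P : α → Prop) [DecidablePred P] :
    #{j ∈ openers f | P (f j)} = #{b ∈ univ.image f | P b} := by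
  rw [← image_openers, filter_image,
    card_image_of_injOn ((injOn_openers f).mono (filter_subset _ _))]

lemma castSucc_mem_openers_snoc {g : Fin n → α} {a : α} {j : Fin n} :
    j.castSucc ∈ openers (Fin.snoc g a : Fin (n + 1) → α) ↔ j ∈ openers g := by
  simp [openers, Fin.forall_fin_succ', Fin.le_last]

lemma rosFun_snoc (g : Fin n → α) (a : α) :
    rosFun (Fin.snoc g a : Fin (n + 1) → α) = rosFun g + #{j ∈ openers g | a < g j} := by
  have hlast (x : Fin n) : ¬ Fin.last n < x.castSucc := (Fin.castSucc_lt_last x).not_gt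
  simp only [rosFun, card_filter, Fintype.sum_prod_type, Fin.sum_univ_castSucc,
    Fin.castSucc_lt_castSucc_iff, castSucc_mem_openers_snoc, Fin.snoc_castSucc, Fin.snoc_last,
    hlast, Fin.castSucc_lt_last, lt_irrefl, false_and, and_false, true_and, if_false, add_zero]
  rw [sum_boole, sum_boole, Nat.cast_id, Nat.cast_id, ← filter_filter, filter_univ_mem]

lemma rosFun_comp {β : Type*} [LinearOrder β] {e : α → β} (he : StrictMono e)
    (f : Fin n → α) : rosFun (e ∘ f) = rosFun f := by
  simp [rosFun, openers, he.injective.eq_iff, he.lt_iff_lt]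

end Openers

section Surjections

variable {n k : ℕ}

def surjections (n k : ℕ) : Finset (Fin n → Fin k) := {f | Surjective f}

lemma mem_surjections {f : Fin n → Fin k} : f ∈ surjections n k ↔ Surjective f := by
  simp [surjections]

lemma surjective_snoc_iff {g : Fin n → Fin k} {a : Fin k} :
    Surjective (Fin.snoc g a : Fin (n + 1) → Fin k) ↔ ∀ b ≠ a, b ∈ Set.range g := by
  simp only [Surjective, Fin.exists_fin_succ', Fin.snoc_castSucc, Fin.snoc_last, Set.mem_range]
  exact forall_congr' fun b => by tauto

lemma rosFun_snoc_of_surjective {g : Fin n → Fin (k + 1)} {a : Fin (k + 1)}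
    (h : Surjective (Fin.snoc g a : Fin (n + 1) → Fin (k + 1))) :
    rosFun (Fin.snoc g a : Fin (n + 1) → Fin (k + 1)) = rosFun g + (k - a) := by
  have hfilter : {b ∈ univ.image g | a < b} = Ioi a := by
    ext b
    simp only [mem_filter, mem_image, mem_univ, true_and, mem_Ioi, and_iff_right_iff_imp]
    exact fun hab => surjective_snoc_iff.mp h b hab.ne'
  rw [rosFun_snoc, card_filter_openers, hfilter, Fin.card_Ioi, Nat.add_sub_cancel]

lemma surjective_snoc_iff_or {g : Fin n → Fin (k + 1)} {a : Fin (k + 1)} :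
    Surjective (Fin.snoc g a : Fin (n + 1) → Fin (k + 1)) ↔
      Surjective g ∨ ∃ h : Fin n → Fin k, Surjective h ∧ a.succAbove ∘ h = g := by
  rw [surjective_snoc_iff]
  constructor
  · intro hg
    by_cases ha : a ∈ Set.range g
    · exact Or.inl fun b => if hb : b = a then hb ▸ ha else hg b hb
    · right
      have hne (x : Fin n) : g x ≠ a := fun hx => ha ⟨x, hx⟩
      choose h hh using fun x => Fin.exists_succAbove_eq (hne x)
      refine ⟨h, fun c => ?_, funext hh⟩
      obtain ⟨x, hx⟩ := hg _ (Fin.succAbove_ne a c)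
      exact ⟨x, Fin.succAbove_right_injective ((hh x).trans hx)⟩
  · rintro (hg | ⟨h, hh, rfl⟩) b hb
    · exact hg b
    · obtain ⟨c, rfl⟩ := Fin.exists_succAbove_eq hb
      obtain ⟨x, rfl⟩ := hh c
      exact ⟨x, rfl⟩

variable {R : Type*} [CommSemiring R]

def rosSurjSum (x : R) (n k : ℕ) : R := ∑ f ∈ surjections n k, x ^ rosFun f

lemma rosSurjSum_zero_zero (x : R) : rosSurjSum x 0 0 = 1 := by
  simp [rosSurjSum, surjections, rosFun, Surjective]

lemma rosSurjSum_succ_zero (x : R) (n : ℕ) : rosSurjSum x (n + 1) 0 = 0 := by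
  simp [rosSurjSum, surjections]

lemma rosSurjSum_zero_succ (x : R) (k : ℕ) : rosSurjSum x 0 (k + 1) = 0 := by
  simp [rosSurjSum, surjections, Surjective]

lemma sum_filter_surjective_snoc (x : R) (a : Fin (k + 1)) :
    ∑ g : Fin n → Fin (k + 1) with Surjective (Fin.snoc g a : Fin (n + 1) → Fin (k + 1)),
      x ^ rosFun g = rosSurjSum x n (k + 1) + rosSurjSum x n k := by
  have hsplit : ({g | Surjective (Fin.snoc g a : Fin (n + 1) → Fin (k + 1))} :
      Finset (Fin n → Fin (k + 1))) =
      surjections n (k + 1) ∪ (surjections n k).image (a.succAbove ∘ ·) := by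
    ext g
    simp [surjective_snoc_iff_or, mem_surjections]
  have hdisj : Disjoint (surjections n (k + 1)) ((surjections n k).image (a.succAbove ∘ ·)) := by
    simp only [disjoint_left, mem_surjections, mem_image, not_exists, not_and]
    intro g hg h _ hgh
    obtain ⟨x, hx⟩ := hg a
    exact Fin.succAbove_ne a (h x) ((congrFun hgh x).trans hx)
  rw [hsplit, sum_union hdisj,
    sum_image (Fin.succAbove_right_injective.comp_left (g := a.succAbove)).injOn]
  simp [rosSurjSum, rosFun_comp (Fin.strictMono_succAbove a)]

lemma rosSurjSum_succ_succ (x : R) (n k : ℕ) :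
    rosSurjSum x (n + 1) (k + 1) =
      (∑ j ∈ range (k + 1), x ^ j) * (rosSurjSum x n (k + 1) + rosSurjSum x n k) := by
  have hgeom : ∑ a : Fin (k + 1), x ^ (k - a : ℕ) = ∑ j ∈ range (k + 1), x ^ j := by
    rw [Fin.sum_univ_eq_sum_range (fun i => x ^ (k - i))]
    exact sum_range_reflect (x ^ ·) (k + 1)
  calc rosSurjSum x (n + 1) (k + 1)
      = ∑ a : Fin (k + 1), ∑ g : Fin n → Fin (k + 1),
          if Surjective (Fin.snoc g a : Fin (n + 1) → Fin (k + 1))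
          then x ^ rosFun (Fin.snoc g a : Fin (n + 1) → Fin (k + 1)) else 0 := by
        rw [rosSurjSum, surjections, sum_filter, ← Fintype.sum_prod_type',
          ← (Fin.snocEquiv fun _ => Fin (k + 1)).sum_comp]
        rfl
    _ = ∑ a : Fin (k + 1), x ^ (k - a : ℕ) *
          ∑ g : Fin n → Fin (k + 1) with Surjective (Fin.snoc g a : Fin (n + 1) → Fin (k + 1)),
            x ^ rosFun g := by
        refine sum_congr rfl fun a _ => ?_
        rw [← sum_filter, mul_sum]
        refine sum_congr rfl fun g hg => ?_
        rw [rosFun_snoc_of_surjective (mem_filter.mp hg).2, pow_add, mul_comm]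
    _ = _ := by simp only [sum_filter_surjective_snoc, ← sum_mul, hgeom]

end Surjections

lemma Finset.min_eq_coe_iff {α : Type*} [LinearOrder α] {s : Finset α} {a : α} :
    s.min = a ↔ a ∈ s ∧ ∀ b ∈ s, a ≤ b :=
  ⟨fun h => ⟨mem_of_min h, fun _ hb => min_le_of_eq hb h⟩, fun ⟨ha, h⟩ =>
    le_antisymm (min_le ha) (Finset.le_min fun b hb => WithTop.coe_le_coe.mpr (h b hb))⟩

section Fibers

variable {n k : ℕ}

def fibers (f : Fin n → Fin k) (b : Fin k) : Finset (Fin n) := {x | f x = b}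

lemma mem_fibers {f : Fin n → Fin k} {b : Fin k} {x : Fin n} : x ∈ fibers f b ↔ f x = b := by
  simp [fibers]

lemma fibers_injective : Injective (fibers : (Fin n → Fin k) → Fin k → Finset (Fin n)) :=
  fun f g h => funext fun x => (mem_fibers.mp (h ▸ mem_fibers.mpr rfl : x ∈ fibers g (f x))).symm

lemma OP_eq_image_fibers : OP n k = (surjections n k).image fibers := by
  ext B
  simp only [OP, mem_filter, mem_univ, true_and, mem_image, mem_surjections]
  constructor
  · rintro ⟨hne, huniq⟩
    choose f hf using huniq
    refine ⟨f, fun b => ?_, funext fun b => ?_⟩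
    · obtain ⟨x, hx⟩ := hne b
      exact ⟨x, ((hf x).2 b hx).symm⟩
    · ext x
      rw [mem_fibers]
      exact ⟨fun h => h ▸ (hf x).1, fun h => ((hf x).2 b h).symm⟩
  · rintro ⟨f, hf, rfl⟩
    refine ⟨fun b => ?_, fun x => ⟨f x, mem_fibers.mpr rfl, fun b hb => (mem_fibers.mp hb).symm⟩⟩
    obtain ⟨x, hx⟩ := hf b
    exact ⟨x, mem_fibers.mpr hx⟩

lemma ros_fibers (f : Fin n → Fin k) : ros (fibers f) = rosFun f := by
  simp [ros, rosFun, mem_fibers, min_eq_coe_iff, openers]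

lemma sum_OP_pow_ros {R : Type*} [CommSemiring R] (x : R) :
    ∑ B ∈ OP n k, x ^ ros B = rosSurjSum x n k := by
  rw [OP_eq_image_fibers, sum_image fibers_injective.injOn]
  simp [rosSurjSum, ros_fibers]

end Fibers

lemma qq_pow_mul_rosSurjSum (n k : ℕ) : qq ^ k.choose 2 * rosSurjSum qq n k = qfacStirling n k := by
  induction n generalizing k with
  | zero =>
    cases k with
    | zero => simp [rosSurjSum_zero_zero, qfacStirling_zero_zero]
    | succ k => rw [rosSurjSum_zero_succ, qfacStirling_zero_succ, mul_zero]
  | succ n ih =>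
    cases k with
    | zero => rw [rosSurjSum_succ_zero, qfacStirling_succ_zero, mul_zero]
    | succ k =>
      rw [rosSurjSum_succ_succ, qfacStirling_succ_succ, ← ih, ← ih, choose_two_succ, pow_add,
        ← qint]
      ring

/-- `ROS = ros + C(k,2)` is Euler-Mahonian on ordered partitions:
`∑_{π ∈ OP(n,k)} q^(ROS π) = [k]!·S_q[n,k]` for `0 ≤ k ≤ n`. -/
theorem sum_ROS_eq (n k : ℕ) (hkn : k ≤ n) :
    ∑ B ∈ OP n k, qq ^ (ros B + Nat.choose k 2) = qfac k * qStirling n k := by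
  simp_rw [pow_add, ← sum_mul, sum_OP_pow_ros]
  rw [mul_comm, qq_pow_mul_rosSurjSum, qfac_mul_qStirling hkn]
end

section
/- For all integers n ≥ 1 and i with 1 ≤ i ≤ n, one has q^{C(n+1,2)}·A_q[n, i−1] = q^{ni}·A_q[n, n−i] as polynomials in q, where C(n+1,2) = n(n+1)/2. -/
/-- The value (as a natural number) of the letter in (0-based) position `i` of the
permutation `p` of `{1,…,n}` (junk value `0` for `i ≥ n`). -/
def permVal {n : ℕ} (p : Equiv.Perm (Fin n)) (i : ℕ) : ℕ :=
  if h : i < n then (p ⟨i, h⟩ : ℕ) else 0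

/-- The set of descents of `p`: the 1-based descent `i ∈ {1,…,n-1}` (with `a_i > a_{i+1}`)
is recorded as the 0-based position `i - 1 ∈ range (n-1)`. -/
def descentSet {n : ℕ} (p : Equiv.Perm (Fin n)) : Finset ℕ :=
  (Finset.range (n - 1)).filter fun i => permVal p (i + 1) < permVal p i

/-- The major index of `p`: the sum of the (1-based) descents of `p`. -/
def maj {n : ℕ} (p : Equiv.Perm (Fin n)) : ℕ := ∑ i ∈ descentSet p, (i + 1)

/-- The number of descents of `p`. -/
def des {n : ℕ} (p : Equiv.Perm (Fin n)) : ℕ := (descentSet p).card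

/-- `A_q[n,j]`, as a polynomial in `q`: `∑ q^(maj p)` over permutations `p` of
`{1,…,n}` with exactly `j` descents. -/
noncomputable def AqPoly (n j : ℕ) : Polynomial ℕ :=
  ∑ p ∈ (Finset.univ : Finset (Equiv.Perm (Fin n))).filter (fun p => des p = j),
    Polynomial.X ^ maj p

open Finset

/-- Reversal of a permutation word. -/
def revP (n : ℕ) (p : Equiv.Perm (Fin n)) : Equiv.Perm (Fin n) :=
  (Fin.revPerm).trans p

lemma permVal_revP {n : ℕ} (p : Equiv.Perm (Fin n)) {i : ℕ} (h : i < n) :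
    permVal (revP n p) i = permVal p (n - 1 - i) := by
  have h2 : n - 1 - i < n := by omega
  simp only [permVal, dif_pos h, dif_pos h2]
  have hr : (Fin.revPerm ⟨i, h⟩ : Fin n) = ⟨n - 1 - i, h2⟩ := by
    ext
    simp only [Fin.revPerm_apply, Fin.val_rev]
    omega
  rw [revP, Equiv.trans_apply, hr]

lemma permVal_ne {n : ℕ} (p : Equiv.Perm (Fin n)) {a b : ℕ} (ha : a < n) (hb : b < n)
    (hab : a ≠ b) : permVal p a ≠ permVal p b := by
  simp only [permVal, dif_pos ha, dif_pos hb]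
  intro h
  have : (⟨a, ha⟩ : Fin n) = ⟨b, hb⟩ := p.injective (Fin.val_injective h)
  exact hab (by simpa [Fin.ext_iff] using this)

lemma mem_descentSet_revP {n : ℕ} (p : Equiv.Perm (Fin n)) {i : ℕ} (hi : i < n - 1) :
    i ∈ descentSet (revP n p) ↔ (n - 2 - i) ∉ descentSet p := by
  have hj : n - 2 - i < n - 1 := by omega
  have e1 : permVal (revP n p) (i + 1) = permVal p (n - 2 - i) := by
    rw [permVal_revP p (by omega : i + 1 < n)]; congr 1; omega
  have e2 : permVal (revP n p) i = permVal p (n - 2 - i + 1) := by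
    rw [permVal_revP p (by omega : i < n)]; congr 1; omega
  have hne : permVal p (n - 2 - i + 1) ≠ permVal p (n - 2 - i) :=
    permVal_ne p (by omega) (by omega) (by omega)
  simp only [descentSet, mem_filter, mem_range]
  constructor
  · rintro ⟨-, hlt⟩ ⟨-, hlt'⟩
    rw [e1, e2] at hlt; omega
  · intro h
    refine ⟨hi, ?_⟩
    rw [e1, e2]
    have : ¬ (permVal p (n - 2 - i + 1) < permVal p (n - 2 - i)) := fun hc => h ⟨hj, hc⟩
    omega

lemma descentSet_subset {n : ℕ} (p : Equiv.Perm (Fin n)) :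
    descentSet p ⊆ range (n - 1) := filter_subset _ _

lemma descentSet_revP {n : ℕ} (p : Equiv.Perm (Fin n)) :
    descentSet (revP n p) = (range (n - 1) \ descentSet p).image (fun j => n - 2 - j) := by
  classical
  ext i
  simp only [mem_image, mem_sdiff, mem_range]
  constructor
  · intro h
    have hi : i < n - 1 := mem_range.mp ((mem_filter.mp h).1)
    exact ⟨n - 2 - i, ⟨by omega, (mem_descentSet_revP p hi).mp h⟩, by omega⟩
  · rintro ⟨j, ⟨hj, hjd⟩, rfl⟩
    have hi : n - 2 - j < n - 1 := by omega
    refine (mem_descentSet_revP p hi).mpr ?_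
    have : n - 2 - (n - 2 - j) = j := by omega
    rwa [this]

lemma injOn_aux (n : ℕ) : Set.InjOn (fun j => n - 2 - j) (range (n - 1) : Finset ℕ) := by
  intro a ha b hb h
  simp only [mem_coe, mem_range] at ha hb
  simp only at h
  omega

lemma des_revP {n : ℕ} (p : Equiv.Perm (Fin n)) : des (revP n p) = n - 1 - des p := by
  classical
  rw [des, descentSet_revP,
    card_image_of_injOn ((injOn_aux n).mono (by exact_mod_cast coe_subset.mpr sdiff_subset))]
  rw [card_sdiff_of_subset (descentSet_subset p), card_range, des]

lemma sum_range_succ_id (m : ℕ) : ∑ j ∈ range m, (j + 1) = (m + 1).choose 2 := by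
  induction m with
  | zero => simp
  | succ k ih =>
      rw [sum_range_succ, ih, Nat.choose_succ_succ (k + 1) 1]
      simp [Nat.choose_one_right, Nat.add_comm]

lemma des_le {n : ℕ} (p : Equiv.Perm (Fin n)) : des p ≤ n - 1 := by
  rw [des]
  simpa using card_le_card (descentSet_subset p)

lemma maj_revP {n : ℕ} (p : Equiv.Perm (Fin n)) :
    maj (revP n p) + n * des p = n.choose 2 + maj p := by
  classical
  set S : Finset ℕ := range (n - 1) \ descentSet p with hS
  have hSsub : S ⊆ range (n - 1) := sdiff_subset
  have hmajq : maj (revP n p) = ∑ j ∈ S, (n - 1 - j) := by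
    rw [maj, descentSet_revP,
      sum_image (fun a ha b hb h => injOn_aux n (hSsub ha) (hSsub hb) h)]
    refine Finset.sum_congr rfl fun j hj => ?_
    have := mem_range.mp (hSsub hj); omega
  have E1 : maj (revP n p) + ∑ j ∈ S, (j + 1) = n * S.card := by
    calc maj (revP n p) + ∑ j ∈ S, (j + 1) = ∑ j ∈ S, ((n - 1 - j) + (j + 1)) := by
          rw [hmajq, ← Finset.sum_add_distrib]
      _ = ∑ _j ∈ S, n := Finset.sum_congr rfl fun j hj => by
          have := mem_range.mp (hSsub hj); omega
      _ = n * S.card := by rw [Finset.sum_const, smul_eq_mul, mul_comm]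
  have E2 : (∑ j ∈ S, (j + 1)) + maj p = ∑ j ∈ range (n - 1), (j + 1) := by
    rw [maj, hS, Finset.sum_sdiff (descentSet_subset p)]
  have E3 : ∑ j ∈ range (n - 1), (j + 1) = n.choose 2 := by
    rcases Nat.eq_zero_or_pos n with rfl | hn
    · simp
    · have h1 : n - 1 + 1 = n := by omega
      rw [sum_range_succ_id, h1]
  have hcard : S.card = n - 1 - des p := by
    rw [hS, card_sdiff_of_subset (descentSet_subset p), card_range, des]
  have hd : des p ≤ n - 1 := des_le p
  rw [hcard] at E1
  have hmul : n * (n - 1 - des p) + n * des p = n * (n - 1) := by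
    rw [← Nat.mul_add]; congr 1; omega
  rw [E3] at E2
  have h2 : 2 * n.choose 2 = n * (n - 1) := by
    rw [Nat.choose_two_right, Nat.two_mul_div_two_of_even]
    exact Nat.even_mul_pred_self n
  generalize n * (n - 1 - des p) = A at E1 hmul
  generalize n * des p = B at hmul ⊢
  generalize n * (n - 1) = C at hmul h2
  omega

lemma revP_revP {n : ℕ} (p : Equiv.Perm (Fin n)) : revP n (revP n p) = p := by
  ext x
  simp [revP, Fin.rev_rev]

/-- For `n ≥ 1` and `1 ≤ i ≤ n`:
`q^(C(n+1,2))·A_q[n,i-1] = q^(ni)·A_q[n,n-i]` as polynomials in `q`. -/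
theorem Aq_duality (n i : ℕ) (hn : 1 ≤ n) (hi : 1 ≤ i) (hin : i ≤ n) :
    Polynomial.X ^ Nat.choose (n + 1) 2 * AqPoly n (i - 1) =
      Polynomial.X ^ (n * i) * AqPoly n (n - i) := by
  classical
  obtain ⟨k, rfl⟩ : ∃ k, i = k + 1 := ⟨i - 1, by omega⟩
  rw [AqPoly, AqPoly, Finset.mul_sum, Finset.mul_sum]
  refine Finset.sum_nbij' (revP n) (revP n) ?_ ?_
    (fun p _ => revP_revP p) (fun p _ => revP_revP p) ?_
  · intro p hp
    simp only [Finset.mem_filter, Finset.mem_univ, true_and] at hp ⊢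
    rw [des_revP, hp]; omega
  · intro p hp
    simp only [Finset.mem_filter, Finset.mem_univ, true_and] at hp ⊢
    have := des_le p
    rw [des_revP, hp]
    omega
  · intro p hp
    simp only [Finset.mem_filter, Finset.mem_univ, true_and] at hp
    rw [← pow_add, ← pow_add]
    congr 1
    have hm := maj_revP p
    rw [hp] at hm
    have hch : (n + 1).choose 2 = n + n.choose 2 := by
      rw [Nat.choose_succ_succ, Nat.choose_one_right]
    have h1 : n * (k + 1 - 1) = n * k := by norm_num
    have h2 : n * (k + 1) = n * k + n := by ring
    rw [h1] at hm
    rw [hch, h2]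
    generalize n * k = B at hm ⊢
    omega
end

section
/- Let p be a permutation of {1,…,n} with descent blocks D_1, …, D_k (as sets, in left-to-right order), and let π = (D_1,…,D_k) be the corresponding ordered partition in OP(n,k). Then π has no block descents, so bmaj(π) = 0, and moreover bmajmil(π) − maj(p) = kn − C(n+1,2), where C(n+1,2) = n(n+1)/2. -/
/-- The set of non-descents of `p`: positions `i ∈ range (n-1)` (0-based) where
`p` is cut into its descent blocks (the maximal contiguous decreasing runs). -/
def nonDescentSet {n : ℕ} (p : Equiv.Perm (Fin n)) : Finset ℕ :=
  (Finset.range (n - 1)).filter fun i => permVal p i < permVal p (i + 1)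

/-- The (0-based) index of the descent block of `p` containing the (0-based)
position `j`. -/
def dBlockIdx {n : ℕ} (p : Equiv.Perm (Fin n)) (j : ℕ) : ℕ :=
  ((nonDescentSet p).filter (· < j)).card

/-- The blocks of an ordered partition, extended by `∅` beyond index `k` (0-based). -/
def blockExt {n k : ℕ} (B : Fin k → Finset (Fin n)) (j : ℕ) : Finset (Fin n) :=
  if h : j < k then B ⟨j, h⟩ else ∅

/-- The set of block descents of `π = (B_1,…,B_k)`: the 1-based block descent
`i ∈ {1,…,k-1}` (with every element of `B_i` greater than every element of `B_{i+1}`)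
is recorded as the 0-based position `i - 1 ∈ range (k-1)`. -/
def bdesSet {n k : ℕ} (B : Fin k → Finset (Fin n)) : Finset ℕ :=
  (Finset.range (k - 1)).filter fun j =>
    ∀ x ∈ blockExt B j, ∀ y ∈ blockExt B (j + 1), y < x

/-- `bmaj(π)`: the sum of the (1-based) block descents of `π`. -/
def bmaj {n k : ℕ} (B : Fin k → Finset (Fin n)) : ℕ := ∑ j ∈ bdesSet B, (j + 1)

/-- `bmajmil(π) = bmaj(π) + ∑_{i=1}^{k} (i-1)·|B_i|`. -/
def bmajmil {n k : ℕ} (B : Fin k → Finset (Fin n)) : ℕ :=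
  bmaj B + ∑ j : Fin k, (j : ℕ) * (B j).card

section Aux

variable {n : ℕ} (p : Equiv.Perm (Fin n))

lemma descentSet_eq : descentSet p = Finset.range (n - 1) \ nonDescentSet p := by
  ext i
  simp only [descentSet, nonDescentSet, Finset.mem_filter, Finset.mem_sdiff, Finset.mem_range]
  constructor
  · rintro ⟨hi, h⟩
    exact ⟨hi, fun hc => by omega⟩
  · rintro ⟨hi, h⟩
    refine ⟨hi, ?_⟩
    rw [not_and] at h
    have h2 := h hi
    have hne : permVal p i ≠ permVal p (i + 1) := by
      unfold permVal
      have h1 : i < n := by omega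
      have h3 : i + 1 < n := by omega
      rw [dif_pos h1, dif_pos h3]
      intro he
      have := p.injective (Fin.val_injective he)
      simp only [Fin.mk.injEq] at this
      omega
    omega

lemma dBlockIdx_zero : dBlockIdx p 0 = 0 := by
  unfold dBlockIdx
  rw [Finset.filter_false_of_mem (fun m _ => by omega), Finset.card_empty]

lemma dBlockIdx_succ (i : ℕ) :
    dBlockIdx p (i + 1) = dBlockIdx p i + (if i ∈ nonDescentSet p then 1 else 0) := by
  unfold dBlockIdx
  by_cases h : i ∈ nonDescentSet p
  · rw [if_pos h]
    have he : (nonDescentSet p).filter (· < i + 1) =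
        insert i ((nonDescentSet p).filter (· < i)) := by
      ext m
      simp only [Finset.mem_filter, Finset.mem_insert]
      constructor
      · rintro ⟨hm, hlt⟩
        rcases eq_or_ne m i with rfl | hne
        · exact Or.inl rfl
        · exact Or.inr ⟨hm, by omega⟩
      · rintro (rfl | ⟨hm, hlt⟩)
        · exact ⟨h, by omega⟩
        · exact ⟨hm, by omega⟩
    rw [he, Finset.card_insert_of_notMem (by simp)]
  · rw [if_neg h, Nat.add_zero]
    have he : (nonDescentSet p).filter (· < i + 1) = (nonDescentSet p).filter (· < i) := by
      ext m
      simp only [Finset.mem_filter]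
      constructor
      · rintro ⟨hm, hlt⟩
        have : m ≠ i := fun he => h (he ▸ hm)
        exact ⟨hm, by omega⟩
      · rintro ⟨hm, hlt⟩
        exact ⟨hm, by omega⟩
    rw [he]
    omega

lemma dBlockIdx_le (j : ℕ) : dBlockIdx p j ≤ (nonDescentSet p).card :=
  Finset.card_le_card (Finset.filter_subset _ _)

lemma dBlockIdx_large {j : ℕ} (hj : n - 1 ≤ j) : dBlockIdx p j = (nonDescentSet p).card := by
  unfold dBlockIdx
  congr 1
  apply Finset.filter_true_of_mem
  intro m hm
  have h1 : m ∈ Finset.range (n - 1) := (Finset.mem_filter.mp hm).1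
  have := Finset.mem_range.mp h1
  omega

lemma exists_boundary : ∀ m c, c < dBlockIdx p m →
    ∃ i ∈ nonDescentSet p, dBlockIdx p i = c ∧ dBlockIdx p (i + 1) = c + 1 := by
  intro m
  induction m with
  | zero => intro c hc; rw [dBlockIdx_zero] at hc; omega
  | succ m ih =>
    intro c hc
    rw [dBlockIdx_succ] at hc
    by_cases h : m ∈ nonDescentSet p
    · rw [if_pos h] at hc
      rcases lt_or_ge c (dBlockIdx p m) with h2 | h2
      · exact ih c h2
      · have he : dBlockIdx p m = c := by omega
        exact ⟨m, h, he, by rw [dBlockIdx_succ, if_pos h, he]⟩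
    · rw [if_neg h] at hc
      exact ih c (by omega)

end Aux

/-- Let `p` be a permutation of `{1,…,n}` with descent blocks `D_1,…,D_k` (as sets of
letters, in left-to-right order), and let `π = (D_1,…,D_k)` be the corresponding ordered
partition. Then `π ∈ OP(n,k)`, `π` has no block descents (so `bmaj(π) = 0`), and
`bmajmil(π) - maj(p) = kn - C(n+1,2)` (as integers). -/
theorem descentBlocks_bmajmil (n : ℕ) (hn : 1 ≤ n) (p : Equiv.Perm (Fin n))
    (k : ℕ) (hk : k = (nonDescentSet p).card + 1)
    (D : Fin k → Finset (Fin n))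
    (hD : ∀ i : Fin k,
      D i = ((Finset.univ : Finset (Fin n)).filter
              fun j : Fin n => dBlockIdx p (j : ℕ) = (i : ℕ)).image ⇑p) :
    D ∈ OP n k ∧ bdesSet D = ∅ ∧ bmaj D = 0 ∧
      (bmajmil D : ℤ) - (maj p : ℤ) = (k : ℤ) * n - Nat.choose (n + 1) 2 := by
  classical
  set S := nonDescentSet p with hSdef
  have hS_range : ∀ m ∈ S, m < n - 1 := fun m hm =>
    Finset.mem_range.mp ((Finset.mem_filter.mp hm).1)
  have hmem : ∀ (x : Fin n) (i : Fin k),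
      x ∈ D i ↔ dBlockIdx p ((p.symm x : Fin n) : ℕ) = (i : ℕ) := by
    intro x i
    rw [hD i]
    simp only [Finset.mem_image, Finset.mem_filter, Finset.mem_univ, true_and]
    constructor
    · rintro ⟨j, hj, rfl⟩
      simpa using hj
    · intro h
      exact ⟨p.symm x, h, p.apply_symm_apply x⟩
  have hone : ∀ i : Fin k, (D i).Nonempty := by
    intro i
    rcases Nat.eq_zero_or_pos (i : ℕ) with h0 | hpos
    · have h0n : (0 : ℕ) < n := hn
      refine ⟨p ⟨0, h0n⟩, ?_⟩
      rw [hmem]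
      simp only [Equiv.symm_apply_apply]
      show dBlockIdx p 0 = (i : ℕ)
      rw [dBlockIdx_zero]
      omega
    · obtain ⟨c, hc⟩ : ∃ c, (i : ℕ) = c + 1 := ⟨(i : ℕ) - 1, by omega⟩
      have hck : c < S.card := by have := i.isLt; omega
      obtain ⟨m, hmS, hm1, hm2⟩ := exists_boundary p (n - 1) c
        (by rw [dBlockIdx_large p (le_refl _)]; exact hck)
      have hmn : m + 1 < n := by have := hS_range m hmS; omega
      refine ⟨p ⟨m + 1, hmn⟩, ?_⟩
      rw [hmem]
      simp only [Equiv.symm_apply_apply]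
      show dBlockIdx p (m + 1) = (i : ℕ)
      omega
  have hOP : D ∈ OP n k := by
    rw [OP, Finset.mem_filter]
    refine ⟨Finset.mem_univ _, hone, ?_⟩
    intro x
    have hlt : dBlockIdx p ((p.symm x : Fin n) : ℕ) < k := by
      have h := dBlockIdx_le p ((p.symm x : Fin n) : ℕ)
      rw [← hSdef] at h; omega
    refine ⟨⟨_, hlt⟩, (hmem x _).mpr rfl, ?_⟩
    intro j' hj'
    rw [hmem] at hj'
    exact Fin.ext hj'.symm
  have hbd : bdesSet D = ∅ := by
    rw [Finset.eq_empty_iff_forall_notMem]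
    intro j hj
    rw [bdesSet, Finset.mem_filter, Finset.mem_range] at hj
    obtain ⟨hjk, hall⟩ := hj
    have hjc : j < S.card := by omega
    obtain ⟨m, hmS, hm1, hm2⟩ := exists_boundary p (n - 1) j
      (by rw [dBlockIdx_large p (le_refl _)]; exact hjc)
    have hmn1 : m < n := by have := hS_range m hmS; omega
    have hmn2 : m + 1 < n := by have := hS_range m hmS; omega
    have hx : p ⟨m, hmn1⟩ ∈ blockExt D j := by
      rw [blockExt, dif_pos (show j < k by omega)]
      rw [hmem]
      simpa using hm1
    have hy : p ⟨m + 1, hmn2⟩ ∈ blockExt D (j + 1) := by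
      rw [blockExt, dif_pos (show j + 1 < k by omega)]
      rw [hmem]
      simpa using hm2
    have hcon := hall _ hx _ hy
    rw [Fin.lt_def] at hcon
    have hlt2 : permVal p m < permVal p (m + 1) := (Finset.mem_filter.mp hmS).2
    unfold permVal at hlt2
    rw [dif_pos hmn1, dif_pos hmn2] at hlt2
    omega
  have hbm : bmaj D = 0 := by rw [bmaj, hbd, Finset.sum_empty]
  refine ⟨hOP, hbd, hbm, ?_⟩
  -- the computation of bmajmil
  have hltk : ∀ x : Fin n, dBlockIdx p (x : ℕ) < k := fun x => by
    have h := dBlockIdx_le p (x : ℕ)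
    rw [← hSdef] at h; omega
  have hcard : ∀ i : Fin k, (D i).card =
      (Finset.univ.filter fun x : Fin n => dBlockIdx p (x : ℕ) = (i : ℕ)).card := by
    intro i
    rw [hD i, Finset.card_image_of_injective _ p.injective]
  have hsum1 : ∑ j : Fin k, (j : ℕ) * (D j).card = ∑ x : Fin n, dBlockIdx p (x : ℕ) := by
    calc ∑ j : Fin k, (j : ℕ) * (D j).card
        = ∑ j : Fin k, ∑ _x ∈ Finset.univ.filter
            (fun x : Fin n => (⟨dBlockIdx p (x : ℕ), hltk x⟩ : Fin k) = j), (j : ℕ) := by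
          apply Finset.sum_congr rfl
          intro j _
          have hfe : (Finset.univ.filter
              (fun x : Fin n => (⟨dBlockIdx p (x : ℕ), hltk x⟩ : Fin k) = j)) =
              Finset.univ.filter (fun x : Fin n => dBlockIdx p (x : ℕ) = (j : ℕ)) := by
            ext x
            simp [Fin.ext_iff]
          rw [hfe, Finset.sum_const, smul_eq_mul, hcard j, mul_comm]
      _ = ∑ x : Fin n, ((⟨dBlockIdx p (x : ℕ), hltk x⟩ : Fin k) : ℕ) :=
          Finset.sum_fiberwise' _ _ _
      _ = ∑ x : Fin n, dBlockIdx p (x : ℕ) := rfl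
  have hsum2 : ∑ x : Fin n, dBlockIdx p (x : ℕ) = ∑ m ∈ S, (n - (m + 1)) := by
    rw [Fin.sum_univ_eq_sum_range (fun i => dBlockIdx p i) n]
    unfold dBlockIdx
    rw [Finset.sum_congr rfl (fun i _ => Finset.card_filter _ _), Finset.sum_comm]
    apply Finset.sum_congr rfl
    intro m hm
    rw [← Finset.card_filter]
    have hIco : (Finset.range n).filter (fun i => m < i) = Finset.Ico (m + 1) n := by
      ext i
      simp only [Finset.mem_filter, Finset.mem_range, Finset.mem_Ico]
      omega
    rw [hIco, Nat.card_Ico]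
  have hB : bmajmil D = ∑ m ∈ S, (n - (m + 1)) := by
    rw [bmajmil, hbm, Nat.zero_add, hsum1, hsum2]
  have hSsub : S ⊆ Finset.range (n - 1) := Finset.filter_subset _ _
  have hmaj : maj p + ∑ m ∈ S, (m + 1) = ∑ i ∈ Finset.range (n - 1), (i + 1) := by
    rw [maj, descentSet_eq p]
    exact Finset.sum_sdiff hSsub
  have hA2 : (∑ i ∈ Finset.range (n - 1), (i + 1)) * 2 = n * (n - 1) := by
    have h1 : ∑ i ∈ Finset.range n, i = ∑ i ∈ Finset.range (n - 1), (i + 1) := by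
      conv_lhs => rw [show n = (n - 1) + 1 by omega]
      rw [Finset.sum_range_succ']
      simp
    rw [← h1, Finset.sum_range_id_mul_two]
  have hC2 : 2 * Nat.choose (n + 1) 2 = (n + 1) * n := by
    rw [Nat.choose_two_right]
    simp only [Nat.add_sub_cancel]
    have hdvd : 2 ∣ (n + 1) * n := by
      rw [mul_comm]
      exact (Nat.even_mul_succ_self n).two_dvd
    omega
  have hrel : (n + 1) * n = n * (n - 1) + 2 * n := by
    obtain ⟨m, rfl⟩ : ∃ m, n = m + 1 := ⟨n - 1, by omega⟩
    simp only [Nat.add_sub_cancel]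
    ring
  have hC : Nat.choose (n + 1) 2 = (∑ i ∈ Finset.range (n - 1), (i + 1)) + n := by omega
  -- now pass to ℤ
  have e1 : (bmajmil D : ℤ) = (S.card : ℤ) * n - ∑ m ∈ S, ((m : ℤ) + 1) := by
    rw [hB, Nat.cast_sum]
    rw [show ∑ m ∈ S, ((n - (m + 1) : ℕ) : ℤ) = ∑ m ∈ S, ((n : ℤ) - ((m : ℤ) + 1)) from
      Finset.sum_congr rfl fun m hm => by
        have := hS_range m hm
        rw [Nat.cast_sub (by omega)]
        push_cast
        ring]
    rw [Finset.sum_sub_distrib, Finset.sum_const, nsmul_eq_mul]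
  have e2 : (maj p : ℤ) =
      (∑ i ∈ Finset.range (n - 1), ((i : ℤ) + 1)) - ∑ m ∈ S, ((m : ℤ) + 1) := by
    have h := congrArg (fun t : ℕ => (t : ℤ)) hmaj
    push_cast at h
    linarith
  have e3 : ((Nat.choose (n + 1) 2 : ℕ) : ℤ) =
      (∑ i ∈ Finset.range (n - 1), ((i : ℤ) + 1)) + n := by
    have h := congrArg (fun t : ℕ => (t : ℤ)) hC
    push_cast at h
    linarith
  have hkz : (k : ℤ) = (S.card : ℤ) + 1 := by exact_mod_cast hk
  rw [e1, e2, e3, hkz]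
  ring
end

section
/- For π ∈ OP(n,k), let π^c ∈ OP(n,k) be the complemented partition obtained by replacing each letter i by n+1−i in every block (keeping the block order). Then rcb(π^c) = ros(π) and rcs(π^c) = rob(π). -/
/-- `rob(π)`: pairs `(i,j)` with `j > i`, `j` the opener of its block, and the block of
`j` strictly to the right of the block of `i`. -/
def rob {n k : ℕ} (B : Fin k → Finset (Fin n)) : ℕ :=
  ((Finset.univ : Finset (Fin n × Fin n)).filter fun ij =>
    ij.1 < ij.2 ∧ ∃ a b : Fin k, ij.1 ∈ B a ∧ ij.2 ∈ B b ∧ (B b).min = ↑ij.2 ∧ a < b).card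

/-- `rcs(π)`: pairs `(i,j)` with `j < i`, `j` the closer of its block, and the block of
`j` strictly to the right of the block of `i`. -/
def rcs {n k : ℕ} (B : Fin k → Finset (Fin n)) : ℕ :=
  ((Finset.univ : Finset (Fin n × Fin n)).filter fun ij =>
    ij.2 < ij.1 ∧ ∃ a b : Fin k, ij.1 ∈ B a ∧ ij.2 ∈ B b ∧ (B b).max = ↑ij.2 ∧ a < b).card

/-- The complement `π^c` of `π`: each letter `i` is replaced by `n+1-i`
(for `Fin n`, the map `Fin.rev`), keeping the block order. -/
def complOP {n k : ℕ} (B : Fin k → Finset (Fin n)) : Fin k → Finset (Fin n) :=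
  fun j => (B j).image Fin.rev

namespace Fin

variable {n : ℕ}

lemma mem_image_rev {s : Finset (Fin n)} {x : Fin n} : x ∈ s.image rev ↔ x.rev ∈ s := by
  simp [Finset.mem_image, rev_eq_iff]

lemma max_image_rev_eq_coe_iff {s : Finset (Fin n)} {j : Fin n} :
    (s.image rev).max = j ↔ s.min = j.rev := by
  constructor
  · intro h
    have hj : j.rev ∈ s := mem_image_rev.mp (Finset.mem_of_max h)
    refine le_antisymm (Finset.min_le hj) (Finset.le_min fun y hy => ?_)
    have hyj : y.rev ≤ j := Finset.le_max_of_eq (mem_image_rev.mpr (by rwa [rev_rev])) h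
    exact WithTop.coe_le_coe.mpr (rev_le_iff.mpr hyj)
  · intro h
    have hj : j ∈ s.image rev := mem_image_rev.mpr (Finset.mem_of_min h)
    refine le_antisymm (Finset.max_le fun y hy => ?_) (Finset.le_max hj)
    have hjy : j.rev ≤ y.rev := Finset.min_le_of_eq (mem_image_rev.mp hy) h
    exact WithBot.coe_le_coe.mpr (rev_le_rev.mp hjy)

end Fin

theorem compl_statistics_general (n k : ℕ) (B : Fin k → Finset (Fin n)) :
    rcb (complOP B) = ros B ∧ rcs (complOP B) = rob B := by
  constructor <;>
  · refine Finset.card_equiv (Fin.revPerm.prodCongr Fin.revPerm) fun p => ?_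
    simp only [Finset.mem_filter, Finset.mem_univ, true_and, Equiv.prodCongr_apply,
      Prod.map_fst, Prod.map_snd, Fin.revPerm_apply, Fin.rev_lt_rev, complOP, Fin.mem_image_rev,
      Fin.max_image_rev_eq_coe_iff]

/-- For every `π ∈ OP(n,k)`: `rcb(π^c) = ros(π)` and `rcs(π^c) = rob(π)`. -/
theorem compl_statistics (n k : ℕ) (B : Fin k → Finset (Fin n)) (hB : B ∈ OP n k) :
    rcb (complOP B) = ros B ∧ rcs (complOP B) = rob B :=
  compl_statistics_general n k B
end
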